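/- Let X be a locally compact T0 space. Then every irreducible closed subset of X is a Rudin set; consequently, the irreducible closed sets, the closed well-filtered determined sets and the closed Rudin sets of X coincide. -/

import Mathlib

open Set

universe u

variable {α : Type u}

/-- The specialization order used in the paper: `x ≤ y` iff `x ∈ closure {y}`. -/
def specLE [TopologicalSpace α] (x y : α) : Prop := x ∈ closure ({y} : Set α)

/-- `↑x = {y | x ≤ y}` in the specialization order. -/
def upOf [TopologicalSpace α] (x : α) : Set α := {y | specLE x y}

/-- `↑F = {y | ∃ a ∈ F, a ≤ y}` in the specialization order. -/
def upSetOf [TopologicalSpace α] (F : Set α) : Set α := {y | ∃ a ∈ F, specLE a y}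

/-- `↓B = {x | ∃ b ∈ B, x ≤ b}` in the specialization order. -/
def downOf [TopologicalSpace α] (B : Set α) : Set α := {x | ∃ b ∈ B, specLE x b}

/-- A set directed with respect to the specialization order: nonempty, and any two
elements have an upper bound in it. -/
def SDirected [TopologicalSpace α] (D : Set α) : Prop :=
  D.Nonempty ∧ ∀ a ∈ D, ∀ b ∈ D, ∃ c ∈ D, specLE a c ∧ specLE b c

/-- `s` is a supremum (least upper bound) of `D` in the specialization order. -/
def SIsSup [TopologicalSpace α] (D : Set α) (s : α) : Prop :=
  (∀ d ∈ D, specLE d s) ∧ ∀ t : α, (∀ d ∈ D, specLE d t) → specLE s t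

/-- Upper set (= saturated set) in the specialization order. -/
def SUpper [TopologicalSpace α] (A : Set α) : Prop :=
  ∀ ⦃x y : α⦄, x ∈ A → specLE x y → y ∈ A

/-- Scott open set with respect to the specialization order. -/
def SScottOpen [TopologicalSpace α] (U : Set α) : Prop :=
  SUpper U ∧ ∀ D : Set α, SDirected D → ∀ s : α, SIsSup D s → s ∈ U → (D ∩ U).Nonempty

/-- A d-space: a dcpo under the specialization order, all open sets Scott open. -/
def IsDSpace (α : Type u) [TopologicalSpace α] : Prop :=
  (∀ D : Set α, SDirected D → ∃ s : α, SIsSup D s) ∧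
    ∀ U : Set α, IsOpen U → SScottOpen U

/-- Member of `K(X)`: nonempty, compact and saturated. -/
def IsKSet [TopologicalSpace α] (K : Set α) : Prop :=
  K.Nonempty ∧ IsCompact K ∧ SUpper K

/-- A filtered family of sets: nonempty, and any two members contain a common member. -/
def FilteredFam (𝒦 : Set (Set α)) : Prop :=
  𝒦.Nonempty ∧ ∀ K1 ∈ 𝒦, ∀ K2 ∈ 𝒦, ∃ K3 ∈ 𝒦, K3 ⊆ K1 ∩ K2

/-- Well-filtered space: for every filtered family of nonempty compact saturated sets whose
intersection is contained in an open `U`, some member is contained in `U`. -/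
def IsWellFiltered (α : Type u) [TopologicalSpace α] : Prop :=
  ∀ 𝒦 : Set (Set α), (∀ K ∈ 𝒦, IsKSet K) → FilteredFam 𝒦 →
    ∀ U : Set α, IsOpen U → ⋂₀ 𝒦 ⊆ U → ∃ K ∈ 𝒦, K ⊆ U

/-- Rudin set: a nonempty set `A` such that for some filtered family `𝒦 ⊆ K(X)`,
`closure A` is a minimal closed set meeting every member of `𝒦`. -/
def IsRudin [TopologicalSpace α] (A : Set α) : Prop :=
  A.Nonempty ∧ ∃ 𝒦 : Set (Set α), (∀ K ∈ 𝒦, IsKSet K) ∧ FilteredFam 𝒦 ∧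
    (∀ K ∈ 𝒦, (closure A ∩ K).Nonempty) ∧
    ∀ B : Set α, IsClosed B → B ⊆ closure A → (∀ K ∈ 𝒦, (B ∩ K).Nonempty) → B = closure A

/-- Well-filtered determined set: every continuous map into a well-filtered T0 space sends it
to a set whose closure is the closure of a unique point. -/
def IsWFD [TopologicalSpace α] (A : Set α) : Prop :=
  ∀ (Y : Type u) [TopologicalSpace Y] [T0Space Y], IsWellFiltered Y →
    ∀ f : α → Y, Continuous f → ∃! y : Y, closure (f '' A) = closure ({y} : Set Y)

/-- Irreducible set. -/
def IsIrred [TopologicalSpace α] (A : Set α) : Prop :=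
  A.Nonempty ∧ ∀ F1 F2 : Set α, IsClosed F1 → IsClosed F2 → A ⊆ F1 ∪ F2 → A ⊆ F1 ∨ A ⊆ F2

/-- Sober space: every irreducible closed set is the closure of a unique point. -/
def IsSober (α : Type u) [TopologicalSpace α] : Prop :=
  ∀ A : Set α, IsClosed A → IsIrred A → ∃! x : α, A = closure ({x} : Set α)

/-- `A` has a maximal element with respect to the specialization order. -/
def HasMaxElem [TopologicalSpace α] (A : Set α) : Prop :=
  ∃ m ∈ A, ∀ a ∈ A, specLE m a → a = m

/-- Strong d-space. -/
def IsStrongDSpace (α : Type u) [TopologicalSpace α] : Prop :=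
  ∀ D : Set α, SDirected D → ∀ x : α, ∀ U : Set α, IsOpen U →
    (⋂ d ∈ D, upOf d) ∩ upOf x ⊆ U → ∃ d ∈ D, upOf d ∩ upOf x ⊆ U

/-!
For a closed irreducible set `A` of a locally compact space, the compact saturated sets whose
interior meets `A` form a filtered family: two such interiors meet inside `A` by irreducibility,
and local compactness puts a compact saturated neighbourhood of a common point inside both.
Local compactness also makes `A` minimal among closed sets meeting this family.

Conversely, continuous images of Rudin sets are Rudin, and in a well-filtered space a Rudin set
is the closure of any point of the intersection of its family lying in its closure; so Rudin sets
are well-filtered determined. A well-filtered determined set is irreducible: its image under the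
pair of characteristic maps of two open sets meeting it, into the finite (hence well-filtered)
square of Sierpiński space, has the closure of a point as closure, so the two open sets meet
inside it.
-/

section Saturation

variable {X : Type*} [TopologicalSpace X]

theorem specLE_iff_specializes {x y : X} : specLE x y ↔ y ⤳ x :=
  specializes_iff_mem_closure.symm

theorem subset_upSetOf (S : Set X) : S ⊆ upSetOf S :=
  fun x hx => ⟨x, hx, specLE_iff_specializes.2 specializes_rfl⟩

theorem sUpper_upSetOf (S : Set X) : SUpper (upSetOf S) := by
  rintro x y ⟨a, ha, hax⟩ hxy
  exact ⟨a, ha, specLE_iff_specializes.2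
    ((specLE_iff_specializes.1 hxy).trans (specLE_iff_specializes.1 hax))⟩

theorem upSetOf_mono {S T : Set X} (h : S ⊆ T) : upSetOf S ⊆ upSetOf T := by
  rintro y ⟨a, ha, hay⟩
  exact ⟨a, h ha, hay⟩

theorem upSetOf_subset_of_isOpen {S U : Set X} (hU : IsOpen U) (h : S ⊆ U) :
    upSetOf S ⊆ U := by
  rintro y ⟨a, ha, hay⟩
  exact (specLE_iff_specializes.1 hay).mem_open hU (h ha)

theorem isCompact_upSetOf {S : Set X} (hS : IsCompact S) : IsCompact (upSetOf S) := by
  refine isCompact_of_finite_subcover fun U hU hcover => ?_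
  obtain ⟨t, ht⟩ := hS.elim_finite_subcover U hU ((subset_upSetOf S).trans hcover)
  exact ⟨t, upSetOf_subset_of_isOpen (isOpen_biUnion fun i _ => hU i) ht⟩

theorem isKSet_upSetOf {S : Set X} (hne : S.Nonempty) (hS : IsCompact S) :
    IsKSet (upSetOf S) :=
  ⟨hne.mono (subset_upSetOf S), isCompact_upSetOf hS, sUpper_upSetOf S⟩

theorem exists_isKSet_mem_interior_subset [LocallyCompactSpace X] {x : X} {U : Set X}
    (hU : IsOpen U) (hx : x ∈ U) : ∃ K, IsKSet K ∧ x ∈ interior K ∧ K ⊆ U := by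
  obtain ⟨K, hK, hxK, hKU⟩ := exists_compact_subset hU hx
  exact ⟨upSetOf K, isKSet_upSetOf ⟨x, interior_subset hxK⟩ hK,
    interior_mono (subset_upSetOf K) hxK, upSetOf_subset_of_isOpen hU hKU⟩

end Saturation

section Rudin

variable {X Y : Type*} [TopologicalSpace X] [TopologicalSpace Y]

theorem isIrred_iff_isIrreducible {A : Set X} : IsIrred A ↔ IsIrreducible A :=
  and_congr_right' isPreirreducible_iff_isClosed_union_isClosed.symm

theorem IsIrreducible.isRudin [LocallyCompactSpace X] {A : Set X} (hirr : IsIrreducible A)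
    (hA : IsClosed A) : IsRudin A := by
  refine ⟨hirr.nonempty, {K | IsKSet K ∧ (A ∩ interior K).Nonempty}, fun K hK => hK.1,
    ⟨?_, ?_⟩, ?_, ?_⟩
  · obtain ⟨x, hx⟩ := hirr.nonempty
    obtain ⟨K, hK, hxK, -⟩ := exists_isKSet_mem_interior_subset isOpen_univ (mem_univ x)
    exact ⟨K, hK, x, hx, hxK⟩
  · rintro K₁ ⟨-, h₁⟩ K₂ ⟨-, h₂⟩
    obtain ⟨x, hxA, hx⟩ := hirr.isPreirreducible _ _ isOpen_interior isOpen_interior h₁ h₂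
    obtain ⟨K, hK, hxK, hKsub⟩ :=
      exists_isKSet_mem_interior_subset (isOpen_interior.inter isOpen_interior) hx
    exact ⟨K, ⟨hK, x, hxA, hxK⟩,
      hKsub.trans (inter_subset_inter interior_subset interior_subset)⟩
  · rintro K ⟨-, x, hxA, hxK⟩
    exact ⟨x, subset_closure hxA, interior_subset hxK⟩
  · intro B hB hBA hBmeet
    rw [hA.closure_eq] at hBA ⊢
    refine hBA.antisymm fun a haA => by_contra fun haB => ?_
    obtain ⟨K, hK, haK, hKB⟩ := exists_isKSet_mem_interior_subset hB.isOpen_compl haB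
    obtain ⟨b, hbB, hbK⟩ := hBmeet K ⟨hK, a, haA, haK⟩
    exact hKB hbK hbB

theorem IsRudin.image {A : Set X} (h : IsRudin A) {f : X → Y} (hf : Continuous f) :
    IsRudin (f '' A) := by
  obtain ⟨hne, 𝒦, hK, hfil, hmeet, hmin⟩ := h
  have hmono {K K' : Set X} (h : K ⊆ K') :
      upSetOf (f '' (K ∩ closure A)) ⊆ upSetOf (f '' (K' ∩ closure A)) :=
    upSetOf_mono (image_mono (inter_subset_inter_left _ h))
  refine ⟨hne.image f, (fun K => upSetOf (f '' (K ∩ closure A))) '' 𝒦, ?_,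
    ⟨hfil.1.image _, ?_⟩, ?_, ?_⟩
  · rintro _ ⟨K, hK𝒦, rfl⟩
    obtain ⟨x, hxA, hxK⟩ := hmeet K hK𝒦
    exact isKSet_upSetOf ⟨f x, x, ⟨hxK, hxA⟩, rfl⟩
      (((hK K hK𝒦).2.1.inter_right isClosed_closure).image hf)
  · rintro _ ⟨K₁, hK₁, rfl⟩ _ ⟨K₂, hK₂, rfl⟩
    obtain ⟨K₃, hK₃, hsub⟩ := hfil.2 K₁ hK₁ K₂ hK₂
    exact ⟨_, ⟨K₃, hK₃, rfl⟩, subset_inter (hmono (hsub.trans inter_subset_left))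
      (hmono (hsub.trans inter_subset_right))⟩
  · rintro _ ⟨K, hK𝒦, rfl⟩
    obtain ⟨x, hxA, hxK⟩ := hmeet K hK𝒦
    exact ⟨f x, image_closure_subset_closure_image hf (mem_image_of_mem f hxA),
      subset_upSetOf _ ⟨x, ⟨hxK, hxA⟩, rfl⟩⟩
  · intro B hB hBA hBmeet
    have hpre : f ⁻¹' B ∩ closure A = closure A := by
      refine hmin _ ((hB.preimage hf).inter isClosed_closure) inter_subset_right fun K hK𝒦 => ?_
      obtain ⟨y, hyB, _, ⟨x, ⟨hxK, hxA⟩, rfl⟩, hxy⟩ := hBmeet _ ⟨K, hK𝒦, rfl⟩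
      exact ⟨x, ⟨(specLE_iff_specializes.1 hxy).mem_closed hB hyB, hxA⟩, hxK⟩
    refine hBA.antisymm (closure_minimal ?_ hB)
    rintro _ ⟨x, hxA, rfl⟩
    exact (hpre.symm ▸ subset_closure hxA : x ∈ f ⁻¹' B ∩ closure A).1

theorem IsRudin.exists_closure_eq_closure_singleton (hY : IsWellFiltered Y) {A : Set Y}
    (h : IsRudin A) : ∃ y, closure A = closure ({y} : Set Y) := by
  obtain ⟨-, 𝒦, hK, hfil, hmeet, hmin⟩ := h
  have hnot : ¬ ⋂₀ 𝒦 ⊆ (closure A)ᶜ := fun hsub => by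
    obtain ⟨K, hK𝒦, hKA⟩ := hY 𝒦 hK hfil _ isClosed_closure.isOpen_compl hsub
    obtain ⟨x, hxA, hxK⟩ := hmeet K hK𝒦
    exact hKA hxK hxA
  obtain ⟨y, hy𝒦, hyA⟩ := not_subset.1 hnot
  refine ⟨y, (hmin (closure {y}) isClosed_closure ?_ fun K hK𝒦 =>
    ⟨y, subset_closure rfl, hy𝒦 K hK𝒦⟩).symm⟩
  exact closure_minimal (singleton_subset_iff.2 (notMem_compl_iff.1 hyA)) isClosed_closure

theorem IsRudin.isWFD [TopologicalSpace α] {A : Set α} (h : IsRudin A) : IsWFD A := by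
  intro Y _ _ hY f hf
  obtain ⟨y, hy⟩ := (h.image hf).exists_closure_eq_closure_singleton hY
  exact ⟨y, hy, fun y' hy' => (inseparable_iff_closure_eq.2 (hy'.symm.trans hy)).eq⟩

end Rudin

section WellFilteredDetermined

theorem isWellFiltered_of_finite (Y : Type u) [TopologicalSpace Y] [Finite Y] :
    IsWellFiltered Y := by
  intro 𝒦 _ hfil U _ hsub
  have : Nonempty 𝒦 := hfil.1.to_subtype
  have hdir : Directed (· ⊇ ·) ((↑) : 𝒦 → Set Y) := fun K₁ K₂ =>
    let ⟨K₃, hK₃, hK₃sub⟩ := hfil.2 K₁ K₁.2 K₂ K₂.2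
    ⟨⟨K₃, hK₃⟩, hK₃sub.trans inter_subset_left, hK₃sub.trans inter_subset_right⟩
  obtain ⟨K₀, hK₀⟩ := hdir.finite_le (id : 𝒦 → 𝒦)
  exact ⟨K₀, K₀.2, fun y hy => hsub fun K hK => hK₀ ⟨K, hK⟩ hy⟩

variable [TopologicalSpace α]

theorem IsWFD.isIrreducible_image {A : Set α} (h : IsWFD A) {Y : Type u} [TopologicalSpace Y]
    [T0Space Y] (hY : IsWellFiltered Y) {f : α → Y} (hf : Continuous f) :
    IsIrreducible (f '' A) := by
  obtain ⟨y, hy, -⟩ := h Y hY f hf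
  exact isIrreducible_iff_closure.1 (hy ▸ isIrreducible_singleton.closure)

theorem IsWFD.isIrreducible {A : Set α} (h : IsWFD A) : IsIrreducible A := by
  let χ (U V : Set α) (x : α) : ULift.{u} Prop × ULift.{u} Prop :=
    (⟨x ∈ U⟩, ⟨x ∈ V⟩)
  have hirr : ∀ U V, IsOpen U → IsOpen V → IsIrreducible (χ U V '' A) := fun U V hU hV =>
    h.isIrreducible_image (isWellFiltered_of_finite _)
      ((continuous_uliftUp.comp (continuous_Prop.2 hU)).prodMk
        (continuous_uliftUp.comp (continuous_Prop.2 hV)))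
  have hfst : IsOpen {z : ULift.{u} Prop × ULift.{u} Prop | z.1.down} :=
    continuous_Prop.1 (continuous_uliftDown.comp continuous_fst)
  have hsnd : IsOpen {z : ULift.{u} Prop × ULift.{u} Prop | z.2.down} :=
    continuous_Prop.1 (continuous_uliftDown.comp continuous_snd)
  refine ⟨(hirr univ univ isOpen_univ isOpen_univ).nonempty.of_image,
    fun U V hU hV ⟨x, hxA, hxU⟩ ⟨x', hx'A, hx'V⟩ => ?_⟩
  obtain ⟨_, ⟨x'', hx''A, rfl⟩, hx''U, hx''V⟩ :=
    (hirr U V hU hV).isPreirreducible _ _ hfst hsnd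
    ⟨χ U V x, mem_image_of_mem _ hxA, hxU⟩ ⟨χ U V x', mem_image_of_mem _ hx'A, hx'V⟩
  exact ⟨x'', hx''A, hx''U, hx''V⟩

end WellFilteredDetermined

theorem stmt_8_general (α : Type u) [TopologicalSpace α] [LocallyCompactSpace α] :
    (∀ A : Set α, IsClosed A → IsIrred A → IsRudin A) ∧
    {A : Set α | IsClosed A ∧ IsIrred A} = {A : Set α | IsClosed A ∧ IsWFD A} ∧
    {A : Set α | IsClosed A ∧ IsIrred A} = {A : Set α | IsClosed A ∧ IsRudin A} := by
  have irred_rudin : ∀ A : Set α, IsClosed A → IsIrred A → IsRudin A := fun _ hA h =>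
    (isIrred_iff_isIrreducible.1 h).isRudin hA
  have wfd_irred : ∀ A : Set α, IsWFD A → IsIrred A := fun _ h =>
    isIrred_iff_isIrreducible.2 h.isIrreducible
  refine ⟨irred_rudin, ?_, ?_⟩ <;> ext A <;> simp only [mem_ofPred_eq]
  · exact ⟨fun ⟨hA, h⟩ => ⟨hA, (irred_rudin A hA h).isWFD⟩,
      fun ⟨hA, h⟩ => ⟨hA, wfd_irred A h⟩⟩
  · exact ⟨fun ⟨hA, h⟩ => ⟨hA, irred_rudin A hA h⟩,
      fun ⟨hA, h⟩ => ⟨hA, wfd_irred A h.isWFD⟩⟩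

/-- in a locally compact T0 space, every irreducible closed set is a Rudin set,
and irreducible closed sets, closed well-filtered determined sets and closed Rudin sets
coincide. -/
theorem stmt_8 (α : Type u) [TopologicalSpace α] [T0Space α] [LocallyCompactSpace α] :
    (∀ A : Set α, IsClosed A → IsIrred A → IsRudin A) ∧
    {A : Set α | IsClosed A ∧ IsIrred A} = {A : Set α | IsClosed A ∧ IsWFD A} ∧
    {A : Set α | IsClosed A ∧ IsIrred A} = {A : Set α | IsClosed A ∧ IsRudin A} :=
  stmt_8_general α
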